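/- For a signed graph Σ = (G, σ) with connected underlying simple graph G, the following are equivalent: (i) Σ is balanced; (ii) the associated signed complete graph K^{Dmax}(Σ) is balanced; (iii) the associated signed complete graph K^{Dmin}(Σ) is balanced; (iv) D^max(Σ) = D^min(Σ) and the (common) associated signed complete graph K^{D±}(Σ) is balanced. -/

import Mathlib

open SimpleGraph

/-- The sign (product of edge signs) of a walk in a graph, computed along its darts. -/
def walkSign {V : Type*} {G : SimpleGraph V} (σ : V → V → ℤ) {u v : V} (p : G.Walk u v) : ℤ :=
  (p.darts.map fun d => σ d.toProd.1 d.toProd.2).prod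

/-- `σ` is a signature on `G`: a symmetric function that is `±1`-valued on edges. -/
def IsSignature {V : Type*} (G : SimpleGraph V) (σ : V → V → ℤ) : Prop :=
  (∀ u v, σ u v = σ v u) ∧ ∀ u v, G.Adj u v → σ u v = 1 ∨ σ u v = -1

/-- A signed graph is balanced when every cycle has sign `+1`. -/
def IsBalanced {V : Type*} (G : SimpleGraph V) (σ : V → V → ℤ) : Prop :=
  ∀ (u : V) (p : G.Walk u u), p.IsCycle → walkSign σ p = 1

/-- A walk is a shortest path when it is a path whose length is the graph distance
between its endpoints. -/
def IsShortestPath {V : Type*} {G : SimpleGraph V} {u v : V} (p : G.Walk u v) : Prop :=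
  p.IsPath ∧ p.length = G.dist u v

open scoped Classical in
/-- `σmax u v = +1` if some shortest `u v`-path is positive, `-1` otherwise. -/
noncomputable def sigmaMax {V : Type*} (G : SimpleGraph V) (σ : V → V → ℤ) (u v : V) : ℤ :=
  if ∃ p : G.Walk u v, IsShortestPath p ∧ walkSign σ p = 1 then 1 else -1

open scoped Classical in
/-- `σmin u v = +1` if all shortest `u v`-paths are positive, `-1` otherwise. -/
noncomputable def sigmaMin {V : Type*} (G : SimpleGraph V) (σ : V → V → ℤ) (u v : V) : ℤ :=
  if ∀ p : G.Walk u v, IsShortestPath p → walkSign σ p = 1 then 1 else -1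

/-- The signed distance matrix `D^max`, with `(u,v)` entry `σmax(u,v)·d(u,v)`. -/
noncomputable def Dmax {V : Type*} (G : SimpleGraph V) (σ : V → V → ℤ) : Matrix V V ℝ :=
  Matrix.of fun u v => (sigmaMax G σ u v : ℝ) * (G.dist u v : ℝ)

/-- The signed distance matrix `D^min`, with `(u,v)` entry `σmin(u,v)·d(u,v)`. -/
noncomputable def Dmin {V : Type*} (G : SimpleGraph V) (σ : V → V → ℤ) : Matrix V V ℝ :=
  Matrix.of fun u v => (sigmaMin G σ u v : ℝ) * (G.dist u v : ℝ)

/-- Two vertices are distance-compatible if all shortest paths between them have the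
same sign. -/
def Compatible {V : Type*} (G : SimpleGraph V) (σ : V → V → ℤ) (u v : V) : Prop :=
  ∀ p q : G.Walk u v, IsShortestPath p → IsShortestPath q → walkSign σ p = walkSign σ q

/-- A signed graph is distance-compatible if every pair of vertices is
distance-compatible. -/
def IsCompatibleGraph {V : Type*} (G : SimpleGraph V) (σ : V → V → ℤ) : Prop :=
  ∀ u v, Compatible G σ u v

/-- The largest eigenvalue of a (symmetric) real matrix: the supremum of the set of real
roots of its characteristic polynomial. -/
noncomputable def largestEigenvalue {n : Type*} [Fintype n] [DecidableEq n]
    (M : Matrix n n ℝ) : ℝ :=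
  sSup {x : ℝ | M.charpoly.IsRoot x}


/-! In a balanced signed graph every closed walk is positive: the bypass of a walk arises by
cutting off closed sub-walks `u → v ⇝ u` whose return part is a path, and such a closed walk is
either a cycle or an edge traversed back and forth, so the sign never changes, while the bypass of
a closed walk is trivial. Hence all `u v`-walks have the same sign, `σmax u v` and `σmin u v` both
equal it, and along any walk of the complete graph these signs telescope. Conversely `σmax` and
`σmin` extend `σ`, and every cycle of `G` is a cycle of the complete graph. -/

section SignedGraph

open Walk

variable {V : Type*} {G H : SimpleGraph V} {σ τ : V → V → ℤ} {u v w : V}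

@[simp] lemma walkSign_nil : walkSign σ (nil : G.Walk u u) = 1 := rfl

@[simp] lemma walkSign_cons (h : G.Adj u v) (p : G.Walk v w) :
    walkSign σ (cons h p) = σ u v * walkSign σ p := by
  simp [walkSign]

@[simp] lemma walkSign_append (p : G.Walk u v) (q : G.Walk v w) :
    walkSign σ (p.append q) = walkSign σ p * walkSign σ q := by
  simp [walkSign]

@[simp] lemma walkSign_toWalk (h : G.Adj u v) : walkSign σ h.toWalk = σ u v := by
  simp [walkSign]

lemma walkSign_reverse (hsymm : ∀ u v, σ u v = σ v u) (p : G.Walk u v) :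
    walkSign σ p.reverse = walkSign σ p := by
  induction p with
  | nil => rfl
  | cons h q ih => simp [ih, hsymm, mul_comm]

lemma walkSign_mul_self (hσ : IsSignature G σ) (p : G.Walk u v) :
    walkSign σ p * walkSign σ p = 1 := by
  induction p with
  | nil => rfl
  | cons h q ih =>
    rw [walkSign_cons, mul_mul_mul_comm, ih, mul_one, mul_self_eq_one_iff]
    exact hσ.2 _ _ h

lemma walkSign_eq_one_or_eq_neg_one (hσ : IsSignature G σ) (p : G.Walk u v) :
    walkSign σ p = 1 ∨ walkSign σ p = -1 :=
  mul_self_eq_one_iff.mp (walkSign_mul_self hσ p)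

lemma walkSign_mapLe (hGH : G ≤ H) (hτ : ∀ u v, G.Adj u v → τ u v = σ u v) (p : G.Walk u v) :
    walkSign τ (p.mapLe hGH) = walkSign σ p := by
  induction p with
  | nil => rfl
  | cons h q ih => simp [ih, hτ _ _ h]

lemma IsBalanced.of_le (hGH : G ≤ H) (hτ : ∀ u v, G.Adj u v → τ u v = σ u v)
    (hb : IsBalanced H τ) : IsBalanced G σ := fun u p hp => by
  rw [← walkSign_mapLe hGH hτ p]
  exact hb u _ (hp.mapLe hGH)

lemma IsBalanced.walkSign_cons_of_isPath (hσ : IsSignature G σ) (hb : IsBalanced G σ)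
    (h : G.Adj u v) {p : G.Walk v u} (hp : p.IsPath) : walkSign σ (cons h p) = 1 := by
  by_cases he : s(u, v) ∈ p.edges
  · rw [hp.eq_adj_toWalk_of_mem_edges (Sym2.eq_swap ▸ he), walkSign_cons, walkSign_toWalk,
      hσ.1 v u, mul_self_eq_one_iff]
    exact hσ.2 u v h
  · exact hb u _ ((cons_isCycle_iff p h).mpr ⟨hp, he⟩)

lemma IsBalanced.walkSign_bypass [DecidableEq V] (hσ : IsSignature G σ) (hb : IsBalanced G σ)
    (p : G.Walk u v) : walkSign σ p.bypass = walkSign σ p := by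
  induction p with
  | nil => rfl
  | @cons u v w h p ih =>
    rw [bypass]
    split_ifs with hs
    · set q := p.bypass
      calc walkSign σ (q.dropUntil u hs)
          = walkSign σ (cons h (q.takeUntil u hs)) * walkSign σ (q.dropUntil u hs) := by
            rw [hb.walkSign_cons_of_isPath hσ h ((bypass_isPath p).takeUntil hs), one_mul]
        _ = σ u v * walkSign σ ((q.takeUntil u hs).append (q.dropUntil u hs)) := by
            rw [walkSign_cons, walkSign_append, mul_assoc]
        _ = walkSign σ (cons h p) := by rw [take_spec, ih, walkSign_cons]
    · rw [walkSign_cons, walkSign_cons, ih]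

lemma IsBalanced.walkSign_eq_one_of_closed (hσ : IsSignature G σ) (hb : IsBalanced G σ)
    (p : G.Walk u u) : walkSign σ p = 1 := by
  classical
  rw [← hb.walkSign_bypass hσ, eq_nil_iff_nil.mpr (isPath_iff_nil.mp (bypass_isPath p)),
    walkSign_nil]

lemma IsBalanced.walkSign_eq (hσ : IsSignature G σ) (hb : IsBalanced G σ)
    (p q : G.Walk u v) : walkSign σ p = walkSign σ q := by
  have hpq := hb.walkSign_eq_one_of_closed hσ (p.append q.reverse)
  rw [walkSign_append, walkSign_reverse hσ.1] at hpq
  calc walkSign σ p = walkSign σ p * (walkSign σ q * walkSign σ q) := by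
        rw [walkSign_mul_self hσ, mul_one]
    _ = walkSign σ q := by rw [← mul_assoc, hpq, one_mul]

lemma IsBalanced.isCompatibleGraph (hσ : IsSignature G σ) (hb : IsBalanced G σ) :
    IsCompatibleGraph G σ :=
  fun _ _ p q _ _ => hb.walkSign_eq hσ p q

lemma sigmaMax_eq_walkSign (hσ : IsSignature G σ) (hc : Compatible G σ u v) {p : G.Walk u v}
    (hp : IsShortestPath p) : sigmaMax G σ u v = walkSign σ p := by
  rw [sigmaMax]
  split_ifs with h
  · obtain ⟨q, hq, hq1⟩ := h
    rw [← hc q p hq hp, hq1]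
  · push Not at h
    exact ((walkSign_eq_one_or_eq_neg_one hσ p).resolve_left (h p hp)).symm

lemma sigmaMin_eq_walkSign (hσ : IsSignature G σ) (hc : Compatible G σ u v) {p : G.Walk u v}
    (hp : IsShortestPath p) : sigmaMin G σ u v = walkSign σ p := by
  rw [sigmaMin]
  split_ifs with h
  · exact (h p hp).symm
  · push Not at h
    obtain ⟨q, hq, hq1⟩ := h
    rw [hc q p hq hp] at hq1
    exact ((walkSign_eq_one_or_eq_neg_one hσ p).resolve_left hq1).symm

lemma isShortestPath_toWalk (h : G.Adj u v) : IsShortestPath h.toWalk :=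
  ⟨h.isPath_toWalk, by simp [dist_eq_one_iff_adj.mpr h]⟩

lemma compatible_of_adj (h : G.Adj u v) : Compatible G σ u v := by
  have hsign : ∀ p : G.Walk u v, IsShortestPath p → walkSign σ p = σ u v := fun p hp => by
    have hlen : p.length = 1 := hp.2.trans (dist_eq_one_iff_adj.mpr h)
    cases p with
    | nil => simp at hlen
    | cons h' q =>
      cases q with
      | nil => simp
      | cons _ _ => simp at hlen
  exact fun p q hp hq => (hsign p hp).trans (hsign q hq).symm

lemma sigmaMax_of_adj (hσ : IsSignature G σ) (h : G.Adj u v) : sigmaMax G σ u v = σ u v :=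
  (sigmaMax_eq_walkSign hσ (compatible_of_adj h) (isShortestPath_toWalk h)).trans
    (walkSign_toWalk h)

lemma sigmaMin_of_adj (hσ : IsSignature G σ) (h : G.Adj u v) : sigmaMin G σ u v = σ u v :=
  (sigmaMin_eq_walkSign hσ (compatible_of_adj h) (isShortestPath_toWalk h)).trans
    (walkSign_toWalk h)

lemma IsBalanced.sigmaMax_eq_walkSign (hσ : IsSignature G σ) (hG : G.Preconnected)
    (hb : IsBalanced G σ) (p : G.Walk u v) : sigmaMax G σ u v = walkSign σ p := by
  obtain ⟨q, hq⟩ := (hG u v).exists_path_of_dist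
  rw [_root_.sigmaMax_eq_walkSign hσ (hb.isCompatibleGraph hσ u v) hq, hb.walkSign_eq hσ q p]

lemma IsBalanced.sigmaMin_eq_walkSign (hσ : IsSignature G σ) (hG : G.Preconnected)
    (hb : IsBalanced G σ) (p : G.Walk u v) : sigmaMin G σ u v = walkSign σ p := by
  obtain ⟨q, hq⟩ := (hG u v).exists_path_of_dist
  rw [_root_.sigmaMin_eq_walkSign hσ (hb.isCompatibleGraph hσ u v) hq, hb.walkSign_eq hσ q p]

lemma isBalanced_top_of_forall_eq_walkSign (hG : G.Preconnected)
    (hτ : ∀ u v (p : G.Walk u v), τ u v = walkSign σ p) :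
    IsBalanced (⊤ : SimpleGraph V) τ := by
  have htelescope : ∀ {a b : V} (w : (⊤ : SimpleGraph V).Walk a b), walkSign τ w = τ a b := by
    intro a b w
    induction w with
    | nil => rw [walkSign_nil, hτ _ _ nil, walkSign_nil]
    | @cons a b c _ w ih =>
      obtain ⟨p⟩ := hG a b
      obtain ⟨q⟩ := hG b c
      rw [walkSign_cons, ih, hτ a b p, hτ b c q, hτ a c (p.append q), walkSign_append]
  intro u w _
  rw [htelescope, hτ u u nil, walkSign_nil]

end SignedGraph

/-- For a signed graph `(G, σ)` with connected underlying simple graph,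
the following are equivalent: (i) `Σ` is balanced; (ii) the associated signed complete
graph `K^{Dmax}(Σ)` (the complete graph with edge `uv` signed `σmax(u,v)`) is balanced;
(iii) the associated signed complete graph `K^{Dmin}(Σ)` is balanced; (iv)
`D^max(Σ) = D^min(Σ)` and the common associated signed complete graph `K^{D±}(Σ)` is
balanced. -/
theorem balanced_tfae_assoc_complete {V : Type*} (G : SimpleGraph V) (σ : V → V → ℤ)
    (hσ : IsSignature G σ) (hG : G.Connected) :
    (IsBalanced G σ ↔ IsBalanced (⊤ : SimpleGraph V) (sigmaMax G σ)) ∧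
    (IsBalanced G σ ↔ IsBalanced (⊤ : SimpleGraph V) (sigmaMin G σ)) ∧
    (IsBalanced G σ ↔
      (Dmax G σ = Dmin G σ ∧ IsBalanced (⊤ : SimpleGraph V) (sigmaMax G σ))) := by
  have hKmax (hb : IsBalanced G σ) : IsBalanced ⊤ (sigmaMax G σ) :=
    isBalanced_top_of_forall_eq_walkSign hG.preconnected
      fun _ _ => hb.sigmaMax_eq_walkSign hσ hG.preconnected
  have hKmin (hb : IsBalanced G σ) : IsBalanced ⊤ (sigmaMin G σ) :=
    isBalanced_top_of_forall_eq_walkSign hG.preconnected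
      fun _ _ => hb.sigmaMin_eq_walkSign hσ hG.preconnected
  have hmax_bal : IsBalanced ⊤ (sigmaMax G σ) → IsBalanced G σ :=
    IsBalanced.of_le le_top fun _ _ => sigmaMax_of_adj hσ
  have hmin_bal : IsBalanced ⊤ (sigmaMin G σ) → IsBalanced G σ :=
    IsBalanced.of_le le_top fun _ _ => sigmaMin_of_adj hσ
  refine ⟨⟨hKmax, hmax_bal⟩, ⟨hKmin, hmin_bal⟩,
    ⟨fun hb => ⟨?_, hKmax hb⟩, fun h => hmax_bal h.2⟩⟩
  ext u v
  obtain ⟨p⟩ := hG.preconnected u v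
  simp only [Dmax, Dmin, Matrix.of_apply, hb.sigmaMax_eq_walkSign hσ hG.preconnected p,
    hb.sigmaMin_eq_walkSign hσ hG.preconnected p]
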